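/- Let $\{\phi^k_h\}$ be vectors in $\mathbb{R}^d$ with $\|\phi^k_h\|_2 \leq 1/\sqrt{H}$ for all $(k,h) \in [K] \times [H]$. Define $\Lambda_1 = I$ and $\Lambda_{k+1} = \Lambda_k + \sum_{h=1}^H \phi^k_h (\phi^k_h)^\top$. Then $\sum_{k=1}^K \sum_{h=1}^H (\phi^k_h)^\top \Lambda_k^{-1} \phi^k_h \leq 2 \log(\det(\Lambda_{K+1})/\det(\Lambda_1))$. -/

import Mathlib

/-!
For `M ⪰ 0` the eigenvalues give `det (1 + M) ≥ 1 + tr M`; writing the batch update as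
`Φ = Cᵀ C`, the identity `det (Λ + CᵀC) = det Λ · det (1 + C Λ⁻¹ Cᵀ)` then shows that batch `k`
raises `log det Λ` by at least `log (1 + q_k)`, where `q_k = tr (Λ_k⁻¹ Φ_k)` is the batch's
potential. As `Λ_k ⪰ 1`, the norm bound forces `q_k ≤ 1`, and there `q ≤ 2 log (1 + q)`.
Summing over `k` telescopes.
-/

open Matrix Finset

theorem Finset.one_add_sum_le_prod_one_add {ι R : Type*} [CommSemiring R] [PartialOrder R]
    [IsOrderedRing R] (s : Finset ι) {f : ι → R} (hf : ∀ i ∈ s, 0 ≤ f i) :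
    1 + ∑ i ∈ s, f i ≤ ∏ i ∈ s, (1 + f i) := by
  classical
  induction s using Finset.induction with
  | empty => simp
  | insert a s has ih =>
    have ha : 0 ≤ f a := hf a (mem_insert_self a s)
    have hs : ∀ i ∈ s, 0 ≤ f i := fun i hi => hf i (mem_insert_of_mem hi)
    rw [sum_insert has, prod_insert has]
    calc 1 + (f a + ∑ i ∈ s, f i)
        ≤ 1 + (f a + ∑ i ∈ s, f i) + f a * ∑ i ∈ s, f i :=
          le_add_of_nonneg_right (mul_nonneg ha (sum_nonneg hs))
      _ = (1 + f a) * (1 + ∑ i ∈ s, f i) := by ring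
      _ ≤ (1 + f a) * ∏ i ∈ s, (1 + f i) :=
          mul_le_mul_of_nonneg_left (ih hs) (add_nonneg zero_le_one ha)

theorem sum_dotProduct_self_le_one {ι n : Type*} [Fintype n] {s : Finset ι} {v : ι → n → ℝ}
    (hv : ∀ i ∈ s, √(v i ⬝ᵥ v i) ≤ 1 / √(#s : ℝ)) : ∑ i ∈ s, v i ⬝ᵥ v i ≤ 1 := by
  have hsq : ∀ i ∈ s, v i ⬝ᵥ v i ≤ 1 / #s := fun i hi => by
    rw [← Real.sqrt_le_sqrt_iff (by positivity), one_div, Real.sqrt_inv, ← one_div]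
    exact hv i hi
  calc ∑ i ∈ s, v i ⬝ᵥ v i ≤ ∑ _i ∈ s, (1 / #s : ℝ) := sum_le_sum hsq
    _ = #s / #s := by rw [sum_const, nsmul_eq_mul, mul_one_div]
    _ ≤ 1 := div_self_le_one _

theorem le_two_mul_log_one_add {x : ℝ} (h0 : 0 ≤ x) (h1 : x ≤ 1) :
    x ≤ 2 * Real.log (1 + x) := by
  have hlog := Real.one_sub_inv_le_log_of_pos (x := 1 + x) (by linarith)
  have hhalf : x / 2 ≤ 1 - (1 + x)⁻¹ := by
    rw [inv_eq_one_div, one_sub_div (by linarith), add_sub_cancel_left]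
    exact div_le_div_of_nonneg_left h0 (by linarith) (by linarith)
  linarith

namespace Matrix

theorem posSemidef_sum_vecMulVec_self {ι n : Type*} [Fintype n] (s : Finset ι)
    (v : ι → n → ℝ) : (∑ i ∈ s, vecMulVec (v i) (v i)).PosSemidef :=
  posSemidef_sum s fun i _ => by simpa using posSemidef_vecMulVec_self_star (v i)

variable {n : Type*} [Fintype n] [DecidableEq n]

theorem IsHermitian.det_one_add {A : Matrix n n ℝ} (hA : A.IsHermitian) :
    (1 + A).det = ∏ i, (1 + hA.eigenvalues i) := by
  have h := congrArg (Polynomial.eval (-1)) hA.charpoly_eq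
  have hneg : scalar n (-1 : ℝ) - A = -(1 + A) := by
    rw [scalar_apply, neg_add, ← diagonal_one, diagonal_neg, sub_eq_add_neg]
  have hprod : ∏ i, (-1 - hA.eigenvalues i) = ∏ i, -(1 + hA.eigenvalues i) :=
    prod_congr rfl fun i _ => by ring
  simp only [eval_charpoly, hneg, det_neg, Polynomial.eval_prod, Polynomial.eval_sub,
    Polynomial.eval_X, Polynomial.eval_C, RCLike.ofReal_real_eq_id, id, hprod, prod_neg,
    card_univ] at h
  exact mul_left_cancel₀ (pow_ne_zero _ (by norm_num)) h

theorem PosSemidef.one_add_trace_le_det_one_add {M : Matrix n n ℝ} (hM : M.PosSemidef) :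
    1 + M.trace ≤ (1 + M).det := by
  rw [hM.isHermitian.det_one_add, hM.isHermitian.trace_eq_sum_eigenvalues]
  exact one_add_sum_le_prod_one_add _ fun i _ => hM.eigenvalues_nonneg i

theorem PosDef.det_mul_one_add_trace_le_det_add {A B : Matrix n n ℝ} (hA : A.PosDef)
    (hB : B.PosSemidef) : A.det * (1 + (A⁻¹ * B).trace) ≤ (A + B).det := by
  obtain ⟨C, rfl⟩ : ∃ C, B = star C * C := by
    open scoped MatrixOrder in exact CStarAlgebra.nonneg_iff_eq_star_mul_self.mp hB.nonneg
  have hM : (C * A⁻¹ * star C).PosSemidef := hA.inv.posSemidef.mul_mul_conjTranspose_same C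
  rw [det_add_mul _ _ hA.det_pos.ne'.isUnit, ← Matrix.mul_assoc, trace_mul_comm,
    ← Matrix.mul_assoc]
  exact mul_le_mul_of_nonneg_left hM.one_add_trace_le_det_one_add hA.det_pos.le

theorem PosSemidef.dotProduct_inv_one_add_mulVec_le {P : Matrix n n ℝ} (hP : P.PosSemidef)
    (x : n → ℝ) : x ⬝ᵥ ((1 + P)⁻¹ *ᵥ x) ≤ x ⬝ᵥ x := by
  set y := (1 + P)⁻¹ *ᵥ x
  have hx : (1 + P) *ᵥ y = x := by
    rw [mulVec_mulVec, mul_nonsing_inv _ (PosDef.one.add_posSemidef hP).det_pos.ne'.isUnit,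
      one_mulVec]
  have hyy : y ⬝ᵥ y ≤ x ⬝ᵥ y := by
    have := hP.dotProduct_mulVec_nonneg y
    rw [star_trivial] at this
    rw [← hx, add_mulVec, one_mulVec, add_dotProduct, dotProduct_comm (P *ᵥ y)]
    linarith
  -- Cauchy–Schwarz: `(x ⬝ y)² ≤ |x|² |y|² ≤ |x|² (x ⬝ y)`
  have hcs : (x ⬝ᵥ y) ^ 2 ≤ (x ⬝ᵥ x) * (y ⬝ᵥ y) := by
    simpa only [dotProduct, sq] using sum_mul_sq_le_sq_mul_sq univ x y
  have hy0 : 0 ≤ y ⬝ᵥ y := by simpa using dotProduct_self_star_nonneg y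
  have hx0 : 0 ≤ x ⬝ᵥ x := by simpa using dotProduct_self_star_nonneg x
  nlinarith

theorem PosSemidef.sum_dotProduct_inv_one_add_mulVec_le {ι : Type*} {P : Matrix n n ℝ}
    (hP : P.PosSemidef) (s : Finset ι) (v : ι → n → ℝ) (hv : ∑ i ∈ s, v i ⬝ᵥ v i ≤ 1) :
    ∑ i ∈ s, v i ⬝ᵥ ((1 + P)⁻¹ *ᵥ v i) ≤
      2 * (Real.log (1 + P + ∑ i ∈ s, vecMulVec (v i) (v i)).det - Real.log (1 + P).det) := by
  set q := ∑ i ∈ s, v i ⬝ᵥ ((1 + P)⁻¹ *ᵥ v i)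
  have hA : (1 + P).PosDef := PosDef.one.add_posSemidef hP
  have hq0 : 0 ≤ q := sum_nonneg fun i _ => by
    simpa using hA.inv.posSemidef.dotProduct_mulVec_nonneg (v i)
  have hq1 : q ≤ 1 := (sum_le_sum fun i _ => hP.dotProduct_inv_one_add_mulVec_le (v i)).trans hv
  have htrace : ((1 + P)⁻¹ * ∑ i ∈ s, vecMulVec (v i) (v i)).trace = q := by
    simp only [mul_sum, trace_sum, mul_vecMulVec, trace_vecMulVec, q, dotProduct_comm]
  have hdet := hA.det_mul_one_add_trace_le_det_add (posSemidef_sum_vecMulVec_self s v)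
  rw [htrace] at hdet
  have hlog : Real.log (1 + P).det + Real.log (1 + q) ≤
      Real.log (1 + P + ∑ i ∈ s, vecMulVec (v i) (v i)).det := by
    rw [← Real.log_mul hA.det_pos.ne' (by linarith)]
    exact Real.log_le_log (mul_pos hA.det_pos (by linarith)) hdet
  linarith [le_two_mul_log_one_add hq0 hq1]

end Matrix

theorem elliptical_potential_lemma (d H K : ℕ)
    (φ : ℕ → ℕ → Fin d → ℝ)
    (hφ : ∀ k ∈ Finset.Icc 1 K, ∀ h ∈ Finset.Icc 1 H,
      Real.sqrt (φ k h ⬝ᵥ φ k h) ≤ 1 / Real.sqrt H)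
    (Λ : ℕ → Matrix (Fin d) (Fin d) ℝ)
    (hΛ1 : Λ 1 = 1)
    (hΛ : ∀ k ∈ Finset.Icc 1 K,
      Λ (k + 1) = Λ k + ∑ h ∈ Finset.Icc 1 H, vecMulVec (φ k h) (φ k h)) :
    ∑ k ∈ Finset.Icc 1 K, ∑ h ∈ Finset.Icc 1 H, φ k h ⬝ᵥ ((Λ k)⁻¹ *ᵥ φ k h) ≤
      2 * Real.log ((Λ (K + 1)).det / (Λ 1).det) := by
  have hΛ_eq_one_add : ∀ k, 1 ≤ k → k ≤ K →
      ∃ P : Matrix (Fin d) (Fin d) ℝ, P.PosSemidef ∧ Λ k = 1 + P := by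
    intro k hk1
    induction k, hk1 using Nat.le_induction with
    | base => exact fun _ => ⟨0, .zero, by rw [hΛ1, add_zero]⟩
    | succ k hk1 ih =>
      intro hkK
      obtain ⟨P, hP, hΛk⟩ := ih (by omega)
      refine ⟨P + _, hP.add (posSemidef_sum_vecMulVec_self (Icc 1 H) (φ k)), ?_⟩
      rw [hΛ k (mem_Icc.mpr ⟨hk1, by omega⟩), hΛk, add_assoc]
  have hstep : ∀ k ∈ Icc 1 K, ∑ h ∈ Icc 1 H, φ k h ⬝ᵥ ((Λ k)⁻¹ *ᵥ φ k h) ≤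
      2 * (Real.log (Λ (k + 1)).det - Real.log (Λ k).det) := by
    intro k hk
    obtain ⟨P, hP, hΛk⟩ := hΛ_eq_one_add k (mem_Icc.mp hk).1 (mem_Icc.mp hk).2
    rw [hΛ k hk, hΛk]
    exact hP.sum_dotProduct_inv_one_add_mulVec_le _ _
      (sum_dotProduct_self_le_one (by simpa using hφ k hk))
  calc _ ≤ ∑ k ∈ Icc 1 K, 2 * (Real.log (Λ (k + 1)).det - Real.log (Λ k).det) :=
        sum_le_sum hstep
    _ = _ := by
        rw [← mul_sum, ← Ico_add_one_right_eq_Icc,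
          sum_Ico_sub (fun k => Real.log (Λ k).det) (by omega), hΛ1, det_one, div_one,
          Real.log_one, sub_zero]
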